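/- Let |~ be a nonmonotonic consequence relation (satisfying Supraclassicality, Left Logical Equivalence, Right Weakening, and And). Define α ⪯ β iff ¬β |~ ¬α. Then ⪯ is a disjunctive entrenchment relation: it satisfies Reflexivity, Left Monotonicity, Logical Equivalence, and Left Disjunction. Moreover, if |~ satisfies Or, then ⪯ satisfies Right Conjunction (γ ⪯ α and γ ⪯ β imply γ ⪯ α∧β). -/

import Mathlib

/-! Since `α ⪯ β` is `¬β |~ ¬α`, each entrenchment postulate is one rule of `|~` read through
contraposition: Left Monotonicity is Right Weakening, Logical Equivalence is Left Logical
Equivalence, Left Disjunction is And (as `¬β ∧ ¬γ ⊢ ¬(β ∨ γ)`), and Right Conjunction is Or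
(as `¬α ∨ ¬β ⊣⊢ ¬(α ∧ β)`). -/

/-- A propositional language: a type of sentences with boolean connectives. -/
structure Lang (L : Type) where
  or : L → L → L
  and : L → L → L
  not : L → L
  imp : L → L → L
  bot : L
  top : L

/-- A classical valuation of the language: respects all connectives. -/
def Lang.Val {L : Type} (S : Lang L) (v : L → Prop) : Prop :=
  (∀ a b, v (S.or a b) ↔ v a ∨ v b) ∧
  (∀ a b, v (S.and a b) ↔ v a ∧ v b) ∧
  (∀ a, v (S.not a) ↔ ¬ v a) ∧
  (∀ a b, v (S.imp a b) ↔ (v a → v b)) ∧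
  ¬ v S.bot ∧ v S.top

/-- Classical consequence from a set of premises. -/
def Lang.SEnt {L : Type} (S : Lang L) (X : Set L) (b : L) : Prop :=
  ∀ v, S.Val v → (∀ a ∈ X, v a) → v b

/-- Classical consequence between single sentences: α ⊢ β. -/
def Lang.ent {L : Type} (S : Lang L) (a b : L) : Prop := S.SEnt {a} b

/-- Deductive closure. -/
def Lang.Cn {L : Type} (S : Lang L) (X : Set L) : Set L := {b | S.SEnt X b}

/-- Coh(α) = {β | ¬ (β ⪯ ¬α)}. -/
def Coh {L : Type} (S : Lang L) (pr : L → L → Prop) (a : L) : Set L :=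
  {b | ¬ pr b (S.not a)}

/-- The base of α: deductively closed subsets of Coh(α). -/
def Base {L : Type} (S : Lang L) (pr : L → L → Prop) (a : L) : Set (Set L) :=
  {U | U = S.Cn U ∧ U ⊆ Coh S pr a}

/-- The maximal base of α. -/
def MaxBase {L : Type} (S : Lang L) (pr : L → L → Prop) (a : L) : Set (Set L) :=
  {U | U ∈ Base S pr a ∧ ∀ U', U' = S.Cn U' → U ⊂ U' → U' ∉ Base S pr a}

/-- Maxiconsistent inference: α |~⪯ β. -/
def MInf {L : Type} (S : Lang L) (pr : L → L → Prop) (a b : L) : Prop :=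
  ∀ U ∈ MaxBase S pr a, b ∈ S.Cn (U ∪ {a})

namespace Lang

variable {L : Type} {S : Lang L}

theorem ent_iff {a b : L} : S.ent a b ↔ ∀ v, S.Val v → v a → v b := by
  simp [Lang.ent, Lang.SEnt]

theorem ent_refl (a : L) : S.ent a a :=
  ent_iff.2 fun _ _ ha => ha

theorem ent_not_of_ent {a b : L} (h : S.ent a b) : S.ent (S.not b) (S.not a) := by
  rw [ent_iff] at h ⊢
  intro v hv
  rw [hv.2.2.1, hv.2.2.1]
  exact mt (h v hv)

theorem ent_and_not_not_or (a b : L) : S.ent (S.and (S.not a) (S.not b)) (S.not (S.or a b)) := by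
  rw [ent_iff]
  rintro v ⟨hor, hand, hnot, -⟩
  simp only [hor, hand, hnot]
  tauto

theorem ent_or_not_not_and (a b : L) : S.ent (S.or (S.not a) (S.not b)) (S.not (S.and a b)) := by
  rw [ent_iff]
  rintro v ⟨hor, hand, hnot, -⟩
  simp only [hor, hand, hnot]
  tauto

theorem ent_not_and_or_not (a b : L) : S.ent (S.not (S.and a b)) (S.or (S.not a) (S.not b)) := by
  rw [ent_iff]
  rintro v ⟨hor, hand, hnot, -⟩
  simp only [hor, hand, hnot]
  tauto

end Lang

/-- From a nonmonotonic consequence relation |~, the relation α ⪯ β iff ¬β |~ ¬α is a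
disjunctive entrenchment relation; if |~ satisfies Or then ⪯ satisfies Right Conjunction. -/
theorem stmt18 {L : Type} (S : Lang L) (nm : L → L → Prop)
    (hsupra : ∀ a b, S.ent a b → nm a b)
    (hlle : ∀ a b c, S.ent a b → S.ent b a → nm a c → nm b c)
    (hrw : ∀ a b c, nm a b → S.ent b c → nm a c)
    (hand : ∀ a b c, nm a b → nm a c → nm a (S.and b c))
    (pr : L → L → Prop)
    (hpr : ∀ a b, pr a b ↔ nm (S.not b) (S.not a)) :
    (∀ a, pr a a) ∧
    (∀ a b c, S.ent a b → pr b c → pr a c) ∧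
    (∀ a b c, S.ent a b → S.ent b a → (pr c a ↔ pr c b)) ∧
    (∀ a b c, pr b a → pr c a → pr (S.or b c) a) ∧
    ((∀ a b c, nm a c → nm b c → nm (S.or a b) c) →
      ∀ a b c, pr c a → pr c b → pr c (S.and a b)) := by
  obtain rfl : pr = fun a b => nm (S.not b) (S.not a) := by
    funext a b
    exact propext (hpr a b)
  refine ⟨fun a => hsupra _ _ (S.ent_refl _), ?_, ?_, ?_, ?_⟩
  · exact fun a b c hab h => hrw _ _ _ h (Lang.ent_not_of_ent hab)
  · exact fun a b c hab hba =>
      ⟨hlle _ _ _ (Lang.ent_not_of_ent hba) (Lang.ent_not_of_ent hab),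
        hlle _ _ _ (Lang.ent_not_of_ent hab) (Lang.ent_not_of_ent hba)⟩
  · exact fun a b c hb hc => hrw _ _ _ (hand _ _ _ hb hc) (Lang.ent_and_not_not_or b c)
  · exact fun hor a b c ha hb =>
      hlle _ _ _ (Lang.ent_or_not_not_and a b) (Lang.ent_not_and_or_not a b) (hor _ _ _ ha hb)
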